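/- Let E be a representation lying in M_{γ, V_{≤φ}} (i.e. all HN subquotients of E have slope ≤ φ) and let u : P_λ → E be a framing such that Coker(u) lies in M_{γ′, V_{>φ}} (all HN subquotients of slope > φ). If g is an automorphism of E with g ∘ u = u, then g = id. In particular, the action of G_γ on the space of such stable framed representations is free. -/

import Mathlib

/-!
If `g ∘ u = u`, then `g - 1` is an endomorphism of `E` vanishing on `range u`, so it factors
through `Coker u`. A nonzero such map would make its image a nonzero subrepresentation of `E`,
of slope `≤ φ`, isomorphic to a nonzero quotient of `Coker u`, of slope `> φ`.
-/

section QuiverRep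

variable {I : Type*} [Quiver I]

/-- A family of subspaces `p i ⊆ V i` is a subrepresentation if it is preserved by
all the structure maps. -/
def IsSubrep (V : I → Type*) [∀ i, AddCommGroup (V i)] [∀ i, Module ℂ (V i)]
    (f : ∀ ⦃i j : I⦄, (i ⟶ j) → (V i →ₗ[ℂ] V j))
    (p : ∀ i, Submodule ℂ (V i)) : Prop :=
  ∀ ⦃i j : I⦄ (e : i ⟶ j), ∀ x ∈ p i, f e x ∈ p j

/-- All Harder–Narasimhan subquotients of the representation `(V, f)` have slope
`≤ φ`; equivalently, every nonzero subrepresentation has slope `≤ φ`. -/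
noncomputable def SlopesLE (V : I → Type*) [∀ i, AddCommGroup (V i)] [∀ i, Module ℂ (V i)]
    (f : ∀ ⦃i j : I⦄, (i ⟶ j) → (V i →ₗ[ℂ] V j))
    (Z : (I → ℤ) →ₗ[ℤ] ℂ) (φ : ℝ) : Prop :=
  ∀ p : ∀ i, Submodule ℂ (V i), IsSubrep V f p → p ≠ (fun _ => ⊥) →
    Complex.arg (Z (fun i => (Module.finrank ℂ (p i) : ℤ))) ≤ φ

/-- All Harder–Narasimhan subquotients of the quotient of `(V, f)` by the
subrepresentation `R` have slope `> φ`; equivalently, every nonzero quotient of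
`V/R` (i.e. `V/p` for a proper subrepresentation `p ⊇ R`) has slope `> φ`. -/
noncomputable def QuotSlopesGT (V : I → Type*) [∀ i, AddCommGroup (V i)] [∀ i, Module ℂ (V i)]
    (f : ∀ ⦃i j : I⦄, (i ⟶ j) → (V i →ₗ[ℂ] V j))
    (Z : (I → ℤ) →ₗ[ℤ] ℂ) (R : ∀ i, Submodule ℂ (V i)) (φ : ℝ) : Prop :=
  ∀ p : ∀ i, Submodule ℂ (V i), IsSubrep V f p → (∀ i, R i ≤ p i) →
    p ≠ (fun _ => ⊤) →
    φ < Complex.arg (Z (fun i =>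
      (Module.finrank ℂ (V i) : ℤ) - (Module.finrank ℂ (p i) : ℤ)))

end QuiverRep

section RepHom

variable {I : Type*} [Quiver I]
  {V W : I → Type*} [∀ i, AddCommGroup (V i)] [∀ i, Module ℂ (V i)]
  [∀ i, AddCommGroup (W i)] [∀ i, Module ℂ (W i)]
  {fV : ∀ ⦃i j : I⦄, (i ⟶ j) → (V i →ₗ[ℂ] V j)}
  {fW : ∀ ⦃i j : I⦄, (i ⟶ j) → (W i →ₗ[ℂ] W j)}

def IsRepHom (fV : ∀ ⦃i j : I⦄, (i ⟶ j) → (V i →ₗ[ℂ] V j))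
    (fW : ∀ ⦃i j : I⦄, (i ⟶ j) → (W i →ₗ[ℂ] W j)) (h : ∀ i, V i →ₗ[ℂ] W i) : Prop :=
  ∀ ⦃i j : I⦄ (e : i ⟶ j), (h j).comp (fV e) = (fW e).comp (h i)

theorem isRepHom_id : IsRepHom fV fV fun _ => LinearMap.id := fun _ _ _ => rfl

theorem IsRepHom.sub {g h : ∀ i, V i →ₗ[ℂ] W i} (hg : IsRepHom fV fW g) (hh : IsRepHom fV fW h) :
    IsRepHom fV fW fun i => g i - h i := by
  intro i j e
  rw [LinearMap.sub_comp, LinearMap.comp_sub, hg e, hh e]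

theorem IsRepHom.apply {h : ∀ i, V i →ₗ[ℂ] W i} (hh : IsRepHom fV fW h) ⦃i j : I⦄ (e : i ⟶ j)
    (x : V i) : h j (fV e x) = fW e (h i x) :=
  LinearMap.congr_fun (hh e) x

theorem IsRepHom.isSubrep_ker {h : ∀ i, V i →ₗ[ℂ] W i} (hh : IsRepHom fV fW h) :
    IsSubrep V fV fun i => LinearMap.ker (h i) := by
  intro i j e x hx
  rw [LinearMap.mem_ker] at hx ⊢
  rw [hh.apply, hx, map_zero]

theorem IsRepHom.isSubrep_range {h : ∀ i, V i →ₗ[ℂ] W i} (hh : IsRepHom fV fW h) :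
    IsSubrep W fW fun i => LinearMap.range (h i) := by
  rintro i j e _ ⟨x, rfl⟩
  exact ⟨fV e x, hh.apply e x⟩

/-- `Hom(F, E) = 0` when `F = V / R` has all slopes `> φ` and `E = W` all slopes `≤ φ`. -/
theorem IsRepHom.eq_zero_of_le_ker [∀ i, FiniteDimensional ℂ (V i)]
    {Z : (I → ℤ) →ₗ[ℤ] ℂ} {φ : ℝ} {R : ∀ i, Submodule ℂ (V i)} {h : ∀ i, V i →ₗ[ℂ] W i}
    (hh : IsRepHom fV fW h) (hW : SlopesLE W fW Z φ) (hV : QuotSlopesGT V fV Z R φ)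
    (hR : ∀ i, R i ≤ LinearMap.ker (h i)) : h = 0 := by
  by_contra hne
  have hker : (fun i => LinearMap.ker (h i)) ≠ fun _ => ⊤ := fun hker =>
    hne (funext fun i => LinearMap.ker_eq_top.mp (congrFun hker i))
  have hrange : (fun i => LinearMap.range (h i)) ≠ fun _ => ⊥ := fun hrange =>
    hne (funext fun i => LinearMap.range_eq_bot.mp (congrFun hrange i))
  have hdim : (fun i => (Module.finrank ℂ (LinearMap.range (h i)) : ℤ)) =
      fun i => (Module.finrank ℂ (V i) : ℤ) - Module.finrank ℂ (LinearMap.ker (h i)) := by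
    funext i
    have := LinearMap.finrank_range_add_finrank_ker (h i)
    omega
  have hle := hW _ hh.isSubrep_range hrange
  rw [hdim] at hle
  exact (hV _ hh.isSubrep_ker hR hker).not_ge hle

end RepHom

/-- let `E = (V, fV)` be a representation all of whose HN subquotients
have slope `≤ φ`, and let `u : P_λ → E` be a framing (a morphism from a
representation `P = (U, fU)`) whose cokernel has all HN slopes `> φ`, i.e. the
quotient of `E` by the subrepresentation `range u` lies in `M_{γ′, V_{>φ}}`.
If `g` is an automorphism of `E` with `g ∘ u = u`, then `g = id`.
(In particular, the action of `G_γ` on stable framed representations is free.) -/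
theorem framed_automorphism_is_id
    {I : Type*} [Quiver I] [Fintype I] [DecidableEq I] [∀ i j : I, Fintype (i ⟶ j)]
    (U V : I → Type*)
    [∀ i, AddCommGroup (U i)] [∀ i, Module ℂ (U i)] [∀ i, FiniteDimensional ℂ (U i)]
    [∀ i, AddCommGroup (V i)] [∀ i, Module ℂ (V i)] [∀ i, FiniteDimensional ℂ (V i)]
    (fU : ∀ ⦃i j : I⦄, (i ⟶ j) → (U i →ₗ[ℂ] U j))
    (fV : ∀ ⦃i j : I⦄, (i ⟶ j) → (V i →ₗ[ℂ] V j))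
    (Z : (I → ℤ) →ₗ[ℤ] ℂ) (hZ : ∀ i : I, 0 < (Z (Pi.single i 1)).im)
    (φ : ℝ)
    (hE : SlopesLE V fV Z φ)
    (u : ∀ i, U i →ₗ[ℂ] V i)
    (hu : ∀ ⦃i j : I⦄ (e : i ⟶ j), (u j).comp (fU e) = (fV e).comp (u i))
    (hcoker : QuotSlopesGT V fV Z (fun i => LinearMap.range (u i)) φ)
    (g : ∀ i, V i →ₗ[ℂ] V i)
    (hgmor : ∀ ⦃i j : I⦄ (e : i ⟶ j), (g j).comp (fV e) = (fV e).comp (g i))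
    (hgbij : ∀ i, Function.Bijective (g i))
    (hgu : ∀ i, (g i).comp (u i) = u i) :
    ∀ i, g i = LinearMap.id := by
  have hfixed : ∀ i, LinearMap.range (u i) ≤ LinearMap.ker (g i - LinearMap.id) := by
    rintro i _ ⟨x, rfl⟩
    simpa [sub_eq_zero] using LinearMap.congr_fun (hgu i) x
  have hzero := (IsRepHom.sub hgmor isRepHom_id).eq_zero_of_le_ker hE hcoker hfixed
  exact fun i => sub_eq_zero.mp (congrFun hzero i)
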